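/- Factorization of the even coefficients: for all integers k, l ≥ 0, ĉ′_e(k, l; s) = ĉ′_e(k, 0; s) · ĉ′_e(0, l; t^{2k} s), as an identity of rational functions in a, c, t, s. -/

import Mathlib

/-!
The Pochhammer symbols `(s/t;t)_{2k+l}` and `(sc²;t)_{2k+l}` split at `2k` into the factor
belonging to `ĉ′_e(k,0;s)` and the one belonging to `ĉ′_e(0,l;t^{2k}s)`; the remaining factors
telescope, `(1 - st^{2k-1})/(1 - s/t) · (1 - st^{2k+2l-1})/(1 - st^{2k-1})`. The cancellation is
legitimate because `1 - st^{2k-1}` is a nonzero rational function: specialising `s = 0, t = 1`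
shows `s tᵐ ≠ tⁿ`.
-/

open Finset

noncomputable section

/-- The rational function field ℚ(a,c,t,s). -/
abbrev RF : Type := FractionRing (MvPolynomial (Fin 4) ℚ)

def gen (i : Fin 4) : RF := algebraMap (MvPolynomial (Fin 4) ℚ) RF (MvPolynomial.X i)

def a : RF := gen 0
def c : RF := gen 1
def t : RF := gen 2
def s : RF := gen 3

/-- The q-Pochhammer symbol (z;q)_k. -/
def qPoch (z q : RF) (k : ℕ) : RF := ∏ j ∈ Finset.range k, (1 - z * q ^ j)

/-- `ĉ′_e(k,l;s)`. -/
def cep (S : RF) (k l : ℕ) : RF :=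
  ((qPoch (t*c^2/a^2) (t^2) k * qPoch (S*c^2*t) (t^2) k * qPoch (S^2*c^4/t^2) (t^2) k) /
    (qPoch (t^2) (t^2) k * qPoch (S*c^2/t) (t^2) k * qPoch (S^2*a^2*c^2/t) (t^2) k)) *
  ((qPoch (1/c^2) t l * qPoch (S/t) t (2*k+l)) / (qPoch t t l * qPoch (S*c^2) t (2*k+l))) *
  ((1 - S * t ^ (2*(k:ℤ) + 2*(l:ℤ) - 1)) / (1 - S/t)) * a^(2*k) * c^(2*l)

lemma qPoch_zero (z q : RF) : qPoch z q 0 = 1 := prod_range_zero _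

lemma qPoch_add (z q : RF) (m n : ℕ) :
    qPoch z q (m + n) = qPoch z q m * qPoch (z * q ^ m) q n := by
  simp only [qPoch, prod_range_add, pow_add, mul_assoc]

lemma t_ne_zero : t ≠ 0 := by
  simp [t, gen]

lemma s_mul_t_pow_ne_t_pow (m n : ℕ) : s * t ^ m ≠ t ^ n := by
  intro h
  have hpoly : (MvPolynomial.X 3 * MvPolynomial.X 2 ^ m : MvPolynomial (Fin 4) ℚ) =
      MvPolynomial.X 2 ^ n :=
    IsFractionRing.injective _ RF (by simpa [s, t, gen] using h)
  simpa using congrArg (MvPolynomial.eval fun i => if i = 3 then 0 else 1) hpoly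

lemma s_mul_t_zpow_ne_one (n : ℤ) : s * t ^ n ≠ 1 := by
  obtain ⟨m, rfl | rfl⟩ := Int.eq_nat_or_neg n
  · simpa using s_mul_t_pow_ne_t_pow m 0
  · rw [zpow_neg, zpow_natCast, ← div_eq_mul_inv, Ne, div_eq_one_iff_eq (pow_ne_zero m t_ne_zero)]
    simpa using s_mul_t_pow_ne_t_pow 0 m

/-- `ĉ′_e(k,l;s) = ĉ′_e(k,0;s) · ĉ′_e(0,l;t^{2k}s)`. -/
theorem cep_factorization (k l : ℕ) :
    cep s k l = cep s k 0 * cep (t^(2*k) * s) 0 l := by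
  have hmid : 1 - s * t ^ (2 * (k : ℤ) - 1) ≠ 0 := sub_ne_zero.2 (s_mul_t_zpow_ne_one _).symm
  have hsplit (z : RF) :
      qPoch z t (2 * k + l) = qPoch z t (2 * k) * qPoch (t ^ (2 * k) * z) t l := by
    rw [qPoch_add, mul_comm z]
  have hshift_mid : t ^ (2 * k) * (s / t) = s * t ^ (2 * (k : ℤ) - 1) := by
    rw [zpow_sub_one₀ t_ne_zero]; norm_cast; ring
  have hshift_end :
      t ^ (2 * k) * (s * t ^ (2 * (l : ℤ) - 1)) = s * t ^ (2 * (k : ℤ) + 2 * l - 1) := by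
    rw [add_sub_assoc, zpow_add₀ t_ne_zero]; norm_cast; ring
  simp only [cep, hsplit, mul_assoc, mul_div_assoc, hshift_mid, hshift_end, qPoch_zero, mul_zero,
    add_zero, zero_add, Nat.cast_zero, pow_zero, mul_one, one_mul, div_one]
  rw [← div_mul_div_cancel₀' hmid (1 - s / t)]
  ring
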